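/- arXiv:2511.22446 — 7 statements merged into one kernel-verified Lean document; each statement's English description precedes it below -/
import Mathlib

section
/- Let d ≥ 3 and K = (k_1,...,k_d) with each k_i in ℕ≥2 ∪ {∞}. The alternating subgroup W_K^+ of the polygonal Coxeter group W_K admits the presentation ⟨a_1,...,a_d | a_i^{k_i} = 1 for each i with k_i < ∞, and a_1 a_2 ⋯ a_d = 1⟩. -/
/-- Relators for the presentation `⟨a_1,…,a_d ∣ a_i^{k_i} = 1 (k_i < ∞), a_1 a_2 ⋯ a_d = 1⟩`
of the alternating subgroup of the polygonal Coxeter group.  Here `k i = 0` encodes `k_i = ∞`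
(the relator `a_i ^ 0 = 1` is vacuous). -/
def altRels (d : ℕ) (k : Fin d → ℕ) : Set (FreeGroup (Fin d)) :=
  {r | (∃ i, r = FreeGroup.of i ^ k i) ∨
    r = (List.ofFn (fun i : Fin d => FreeGroup.of i)).prod}

/-!
Write `a i` for the generators of `G = PresentedGroup (altRels d k)` and
`p j = a 0 * ⋯ * a (j-1)` for its prefix products, so that `p 0 = p d = 1`. The assignment
`a i ↦ p i * (p (i+1))⁻¹` defines an involutive automorphism `σ = reflect` of `G`, the model of
conjugation by `s 0`. In `G ⋊ ℤ/2` the elements `(p i⁻¹, 1)` are involutions whose consecutive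
products are the `inl (a i)`, so `s i ↦ (p i⁻¹, 1)` defines `Θ : W_K → G ⋊ ℤ/2`; conversely
`a i ↦ s i * s (i+1)` together with `1 ↦ s 0` defines a left inverse of `Θ`. Hence `Θ` is
injective, `Θ (s i * s (i+1)) = inl (a i)`, and the sign character is `Θ` followed by the
projection to `ℤ/2`, whose kernel is the image of `inl`.
-/

theorem map_prod_take_ofFn_eq_mul_inv {F H : Type*} [Group F] [Group H] {d : ℕ} (f : F →* H)
    (x : Fin d → F) (g : ℕ → H)
    (hf : ∀ i : Fin d, f (x i) = g i * (g (i + 1))⁻¹) {j : ℕ} (hj : j ≤ d) :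
    f ((List.ofFn x).take j).prod = g 0 * (g j)⁻¹ := by
  induction j with
  | zero => simp
  | succ j ih =>
    rw [List.prod_take_succ _ _ (by simpa using hj), map_mul, ih (by omega), List.getElem_ofFn,
      hf]
    group

noncomputable def zmodTwoHom {H : Type*} [Group H] (x : H) (hx : x ^ 2 = 1) :
    Multiplicative (ZMod 2) →* H :=
  AddMonoidHom.toMultiplicativeLeft <| ZMod.lift 2
    ⟨zmultiplesHom (Additive H) (Additive.ofMul x), by
      rw [zmultiplesHom_apply, natCast_zsmul, ← ofMul_pow, hx, ofMul_one]⟩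

theorem zmodTwoHom_ofAdd_one {H : Type*} [Group H] (x : H) (hx : x ^ 2 = 1) :
    zmodTwoHom x hx (Multiplicative.ofAdd 1) = x := by
  change Additive.toMul (ZMod.lift 2 _ ((1 : ℤ) : ZMod 2)) = x
  rw [ZMod.lift_coe]
  simp

namespace SemidirectProduct

variable {N G W : Type*} [Group N] [Group G] [Group W] {θ : G →* MulAut N}

theorem range_eq_ker_rightHom_comp {φ : N →* W} {Θ : W →* N ⋊[θ] G}
    (hΘ : Function.Injective Θ) (h : Θ.comp φ = inl) :
    φ.range = (rightHom.comp Θ).ker := by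
  ext w
  constructor
  · rintro ⟨n, rfl⟩
    simp [← MonoidHom.comp_apply Θ φ, h]
  · intro hw
    obtain ⟨n, hn⟩ : Θ w ∈ (inl : N →* N ⋊[θ] G).range := by
      rwa [range_inl_eq_ker_rightHom]
    exact ⟨n, hΘ (by rw [← MonoidHom.comp_apply, h, hn])⟩

noncomputable def mulEquivKerRightHomComp {φ : N →* W} {Θ : W →* N ⋊[θ] G}
    (hΘ : Function.Injective Θ) (h : Θ.comp φ = inl) : N ≃* (rightHom.comp Θ).ker :=
  have hφ : Function.Injective φ :=
    .of_comp (f := Θ) (by rw [← MonoidHom.coe_comp, h]; exact inl_injective)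
  (MonoidHom.ofInjective hφ).trans (MulEquiv.subgroupCongr (range_eq_ker_rightHom_comp hΘ h))

end SemidirectProduct

namespace altRels

variable {d : ℕ} (k : Fin d → ℕ)

theorem of_pow_eq_one (i : Fin d) :
    (PresentedGroup.of i : PresentedGroup (altRels d k)) ^ k i = 1 :=
  PresentedGroup.one_of_mem (Or.inl ⟨i, rfl⟩)

theorem prod_ofFn_of_eq_one :
    (List.ofFn (PresentedGroup.of (rels := altRels d k))).prod = 1 := by
  have h := PresentedGroup.one_of_mem (rels := altRels d k) (Or.inr rfl)
  rwa [map_list_prod, List.map_ofFn] at h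

def prefixProd (j : ℕ) : PresentedGroup (altRels d k) :=
  ((List.ofFn (PresentedGroup.of (rels := altRels d k))).take j).prod

theorem prefixProd_zero : prefixProd k 0 = 1 := rfl

theorem prefixProd_succ {j : ℕ} (hj : j < d) :
    prefixProd k (j + 1) = prefixProd k j * PresentedGroup.of ⟨j, hj⟩ := by
  rw [prefixProd, List.prod_take_succ _ _ (by simpa using hj), List.getElem_ofFn]
  rfl

theorem prefixProd_self : prefixProd k d = 1 := by
  rw [prefixProd, List.take_of_length_le (by simp), prod_ofFn_of_eq_one]

theorem inv_prefixProd_mul_prefixProd_add_one (h1 : 1 < d) (i : Fin d) :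
    (prefixProd k i)⁻¹ * prefixProd k ↑(i + ⟨1, h1⟩) = PresentedGroup.of i := by
  have hsucc := prefixProd_succ k i.isLt
  rw [Fin.val_add]
  rcases Nat.lt_or_ge (i + 1) d with hi | hi
  · rw [Nat.mod_eq_of_lt hi, hsucc, inv_mul_cancel_left]
  · rw [show i.val + 1 = d by omega, prefixProd_self] at hsucc
    rw [show (i.val + 1) % d = 0 by simp [show i.val + 1 = d by omega], prefixProd_zero, mul_one,
      inv_eq_of_mul_eq_one_right hsucc.symm]

theorem prefixProd_mul_inv_prefixProd_succ (i : Fin d) :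
    prefixProd k i * (prefixProd k (i + 1 : ℕ))⁻¹
      = MulAut.conj (prefixProd k i) (PresentedGroup.of i)⁻¹ := by
  rw [prefixProd_succ k i.isLt, MulAut.conj_apply, mul_inv_rev, mul_assoc]

theorem reflect_rels : ∀ r ∈ altRels d k,
    FreeGroup.lift (fun i : Fin d => prefixProd k i * (prefixProd k (i + 1 : ℕ))⁻¹) r = 1 := by
  rintro r (⟨i, rfl⟩ | rfl)
  · rw [map_pow, FreeGroup.lift_apply_of, prefixProd_mul_inv_prefixProd_succ, ← map_pow, inv_pow,
      of_pow_eq_one, inv_one, map_one]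
  · rw [← List.take_of_length_le (le_of_eq (List.length_ofFn (f := FreeGroup.of))),
      map_prod_take_ofFn_eq_mul_inv _ _ (prefixProd k) (fun i => FreeGroup.lift_apply_of) le_rfl,
      prefixProd_zero, prefixProd_self, inv_one, mul_one]

def reflect : PresentedGroup (altRels d k) →* PresentedGroup (altRels d k) :=
  PresentedGroup.toGroup (reflect_rels k)

theorem reflect_of (i : Fin d) :
    reflect k (PresentedGroup.of i) = prefixProd k i * (prefixProd k (i + 1 : ℕ))⁻¹ :=
  PresentedGroup.toGroup.of _

theorem reflect_prefixProd {j : ℕ} (hj : j ≤ d) :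
    reflect k (prefixProd k j) = (prefixProd k j)⁻¹ := by
  rw [prefixProd, map_prod_take_ofFn_eq_mul_inv _ _ _ (reflect_of k) hj, ← prefixProd,
    prefixProd_zero, one_mul]

theorem reflect_comp_reflect : (reflect k).comp (reflect k) = MonoidHom.id _ :=
  PresentedGroup.ext fun i => by
    rw [MonoidHom.comp_apply, reflect_of, map_mul, map_inv, reflect_prefixProd k i.isLt.le,
      reflect_prefixProd k i.isLt, inv_inv, prefixProd_succ k i.isLt, inv_mul_cancel_left]
    rfl

def reflectAut : MulAut (PresentedGroup (altRels d k)) :=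
  (reflect k).toMulEquiv (reflect k) (reflect_comp_reflect k) (reflect_comp_reflect k)

theorem reflectAut_sq : reflectAut k ^ 2 = 1 :=
  MulEquiv.ext fun g => DFunLike.congr_fun (reflect_comp_reflect k) g

noncomputable def action : Multiplicative (ZMod 2) →* MulAut (PresentedGroup (altRels d k)) :=
  zmodTwoHom (reflectAut k) (reflectAut_sq k)

theorem action_ofAdd_one (g : PresentedGroup (altRels d k)) :
    action k (Multiplicative.ofAdd 1) g = reflect k g := by
  rw [action, zmodTwoHom_ofAdd_one]
  rfl

abbrev Ext := PresentedGroup (altRels d k) ⋊[action k] Multiplicative (ZMod 2)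

end altRels

def CoxeterMatrix.IsPolygonal {d : ℕ} (M : CoxeterMatrix (Fin d)) (k : Fin d → ℕ) (h1 : 1 < d) :
    Prop :=
  ∀ i j : Fin d, M.M i j =
    if i = j then 1 else if j = i + ⟨1, h1⟩ then k i else if i = j + ⟨1, h1⟩ then k j else 0

theorem Fin.val_add_one_mk {d : ℕ} (h1 : 1 < d) (i : Fin d) :
    (i + ⟨1, h1⟩ : Fin d).val = (i.val + 1) % d :=
  Fin.val_add _ _

theorem Fin.ne_add_one_mk {d : ℕ} (h1 : 1 < d) (i : Fin d) : i ≠ i + ⟨1, h1⟩ := by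
  intro h
  have h' := congrArg Fin.val h
  rw [Fin.val_add_one_mk] at h'
  rcases Nat.lt_or_ge (i + 1) d with hi | hi
  · rw [Nat.mod_eq_of_lt hi] at h'
    omega
  · rw [show i.val + 1 = d by omega, Nat.mod_self] at h'
    omega

namespace CoxeterMatrix

variable {d : ℕ} (M : CoxeterMatrix (Fin d))

def simpleMod (hd : 0 < d) (j : ℕ) : M.Group := M.simple ⟨j % d, Nat.mod_lt j hd⟩

variable {M}

theorem simpleMod_val (hd : 0 < d) (i : Fin d) : M.simpleMod hd i = M.simple i := by
  simp [simpleMod, Nat.mod_eq_of_lt i.isLt]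

theorem simpleMod_self (hd : 0 < d) : M.simpleMod hd d = M.simpleMod hd 0 := by
  simp [simpleMod]

theorem simpleMod_val_add_one (h1 : 1 < d) (i : Fin d) :
    M.simpleMod (by omega) (i + 1) = M.simple (i + ⟨1, h1⟩) := by
  simp only [simpleMod, ← Fin.val_add_one_mk h1]

theorem inv_simpleMod (hd : 0 < d) (j : ℕ) : (M.simpleMod hd j)⁻¹ = M.simpleMod hd j :=
  M.toCoxeterSystem.inv_simple _

theorem simpleMod_sq (hd : 0 < d) (j : ℕ) : M.simpleMod hd j ^ 2 = 1 :=
  M.toCoxeterSystem.simple_sq _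

theorem simple_mul_simple_add_one (h1 : 1 < d) (i : Fin d) :
    M.simple i * M.simple (i + ⟨1, h1⟩)
      = M.simpleMod (by omega) i * (M.simpleMod (by omega) (i + 1))⁻¹ := by
  rw [inv_simpleMod, simpleMod_val, simpleMod_val_add_one]

theorem IsPolygonal.apply_add_one {k : Fin d → ℕ} {h1 : 1 < d} (hM : M.IsPolygonal k h1)
    (i : Fin d) : M.M i (i + ⟨1, h1⟩) = k i := by
  rw [hM, if_neg (Fin.ne_add_one_mk h1 i), if_pos rfl]

end CoxeterMatrix

namespace altRels

open CoxeterMatrix SemidirectProduct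

variable {d : ℕ} (k : Fin d → ℕ) {M : CoxeterMatrix (Fin d)} {h1 : 1 < d}

theorem toCoxeter_rels (hM : M.IsPolygonal k h1) : ∀ r ∈ altRels d k,
    FreeGroup.lift (fun i => M.simple i * M.simple (i + ⟨1, h1⟩)) r = 1 := by
  rintro r (⟨i, rfl⟩ | rfl)
  · rw [map_pow, FreeGroup.lift_apply_of, ← hM.apply_add_one]
    exact M.toCoxeterSystem.simple_mul_simple_pow _ _
  · rw [← List.take_of_length_le (le_of_eq (List.length_ofFn (f := FreeGroup.of))),
      map_prod_take_ofFn_eq_mul_inv _ FreeGroup.of _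
        (fun i => (FreeGroup.lift_apply_of).trans (simple_mul_simple_add_one h1 i)) le_rfl,
      simpleMod_self, mul_inv_cancel]

def toCoxeter (hM : M.IsPolygonal k h1) : PresentedGroup (altRels d k) →* M.Group :=
  PresentedGroup.toGroup (toCoxeter_rels k hM)

theorem toCoxeter_of (hM : M.IsPolygonal k h1) (i : Fin d) :
    toCoxeter k hM (PresentedGroup.of i) = M.simple i * M.simple (i + ⟨1, h1⟩) :=
  PresentedGroup.toGroup.of _

theorem toCoxeter_prefixProd (hM : M.IsPolygonal k h1) {j : ℕ} (hj : j ≤ d) :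
    toCoxeter k hM (prefixProd k j) = M.simpleMod (by omega) 0 * M.simpleMod (by omega) j := by
  rw [prefixProd, map_prod_take_ofFn_eq_mul_inv _ PresentedGroup.of _
    (fun i => (toCoxeter_of k hM i).trans (simple_mul_simple_add_one h1 i)) hj, inv_simpleMod]

def extGen (i : Fin d) : Ext k := ⟨(prefixProd k i)⁻¹, Multiplicative.ofAdd 1⟩

theorem extGen_mul_extGen (i j : Fin d) :
    extGen k i * extGen k j = inl ((prefixProd k i)⁻¹ * prefixProd k j) := by
  ext
  · rw [mul_left, left_inl, extGen, extGen, action_ofAdd_one, map_inv,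
      reflect_prefixProd k j.isLt.le, inv_inv]
  · exact (by decide : Multiplicative.ofAdd (1 : ZMod 2) * Multiplicative.ofAdd 1 = 1)

theorem extGen_isLiftable (hM : M.IsPolygonal k h1) : M.IsLiftable (extGen k) := by
  intro i j
  rw [extGen_mul_extGen, ← map_pow, hM]
  split_ifs with hij hj hi
  · simp [hij]
  · rw [hj, inv_prefixProd_mul_prefixProd_add_one, of_pow_eq_one, map_one]
  · rw [hi, ← inv_inv (_ * _), mul_inv_rev, inv_inv, inv_prefixProd_mul_prefixProd_add_one,
      inv_pow, of_pow_eq_one, inv_one, map_one]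
  · rw [pow_zero, map_one]

noncomputable def ofCoxeter (hM : M.IsPolygonal k h1) : M.Group →* Ext k :=
  M.toCoxeterSystem.lift ⟨extGen k, extGen_isLiftable k hM⟩

theorem ofCoxeter_simple (hM : M.IsPolygonal k h1) (i : Fin d) :
    ofCoxeter k hM (M.simple i) = extGen k i :=
  M.toCoxeterSystem.lift_apply_simple _ i

theorem ofCoxeter_comp_toCoxeter (hM : M.IsPolygonal k h1) :
    (ofCoxeter k hM).comp (toCoxeter k hM) = inl :=
  PresentedGroup.ext fun i => by
    rw [MonoidHom.comp_apply, toCoxeter_of, map_mul, ofCoxeter_simple, ofCoxeter_simple,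
      extGen_mul_extGen, inv_prefixProd_mul_prefixProd_add_one]

theorem toCoxeter_comp_reflect (hM : M.IsPolygonal k h1) :
    (toCoxeter k hM).comp (reflect k)
      = (MulAut.conj (M.simpleMod (by omega) 0)).toMonoidHom.comp (toCoxeter k hM) :=
  PresentedGroup.ext fun i => by
    rw [MonoidHom.comp_apply, MonoidHom.comp_apply, reflect_of, map_mul, map_inv,
      toCoxeter_prefixProd k hM i.isLt.le, toCoxeter_prefixProd k hM i.isLt, toCoxeter_of,
      simple_mul_simple_add_one h1, MulEquiv.coe_toMonoidHom, MulAut.conj_apply,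
      mul_inv_rev, inv_simpleMod, inv_simpleMod]
    group

noncomputable def extToCoxeter (hM : M.IsPolygonal k h1) : Ext k →* M.Group :=
  lift (toCoxeter k hM)
    (zmodTwoHom (M.simpleMod (by omega) 0) (simpleMod_sq _ 0)) fun g => by
      obtain rfl | rfl : g = 1 ∨ g = Multiplicative.ofAdd 1 := by revert g; decide
      · ext; simp
      · rw [zmodTwoHom_ofAdd_one, ← toCoxeter_comp_reflect k hM]
        ext
        simp [action_ofAdd_one]

theorem extToCoxeter_comp_ofCoxeter (hM : M.IsPolygonal k h1) :
    (extToCoxeter k hM).comp (ofCoxeter k hM) = MonoidHom.id M.Group :=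
  M.toCoxeterSystem.ext_simple fun i => by
    rw [M.toCoxeterSystem_simple, MonoidHom.comp_apply, ofCoxeter_simple, extGen,
      mk_eq_inl_mul_inr, map_mul, extToCoxeter, lift_inl, lift_inr, zmodTwoHom_ofAdd_one, map_inv,
      toCoxeter_prefixProd k hM i.isLt.le, mul_inv_rev, inv_mul_cancel_right, inv_simpleMod,
      simpleMod_val]
    rfl

theorem rightHom_ofCoxeter_simple (hM : M.IsPolygonal k h1) (i : Fin d) :
    rightHom (ofCoxeter k hM (M.simple i)) = Multiplicative.ofAdd 1 := by
  rw [ofCoxeter_simple]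
  rfl

end altRels

open altRels SemidirectProduct in
/-- Let `d ≥ 3` and `K = (k_1,…,k_d)` with each `k_i ∈ ℕ≥2 ∪ {∞}`
(encoded as `k i ≠ 1`, with `k i = 0` meaning `∞`).  Let `M` be the Coxeter matrix of the
polygonal Coxeter group `W_K` (entries `1` on the diagonal, `k i` between consecutive indices
mod `d`, and `0` (= ∞, no relation) otherwise), and let `sgn : W_K →* ℤ/2ℤ` be the
homomorphism sending every Coxeter generator to `1`.  Then the alternating subgroup
`W_K⁺ = ker sgn` is isomorphic to the presented group
`⟨a_1,…,a_d ∣ a_i^{k_i} = 1 (k_i < ∞), a_1 ⋯ a_d = 1⟩`. -/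
theorem stmt0 (d : ℕ) (hd : 3 ≤ d) (k : Fin d → ℕ)
    (M : CoxeterMatrix (Fin d))
    (hM : ∀ i j : Fin d, M.M i j =
      if i = j then 1 else if j = i + ⟨1, by omega⟩ then k i else if i = j + ⟨1, by omega⟩ then k j else 0)
    (sgn : M.Group →* Multiplicative (ZMod 2))
    (hsgn : ∀ i : Fin d, sgn (PresentedGroup.of i) = Multiplicative.ofAdd 1) :
    Nonempty (sgn.ker ≃* PresentedGroup (altRels d k)) := by
  replace hM : M.IsPolygonal k (by omega) := hM
  have hsgn_eq : sgn = rightHom.comp (ofCoxeter k hM) :=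
    M.toCoxeterSystem.ext_simple fun i => by
      rw [M.toCoxeterSystem_simple, MonoidHom.comp_apply, rightHom_ofCoxeter_simple]
      exact hsgn i
  have hinj : Function.Injective (ofCoxeter k hM) :=
    Function.LeftInverse.injective (g := extToCoxeter k hM)
      (DFunLike.congr_fun (extToCoxeter_comp_ofCoxeter k hM))
  subst hsgn_eq
  exact ⟨(mulEquivKerRightHomComp hinj (ofCoxeter_comp_toCoxeter k hM)).symm⟩
end

section
/- For d ≥ 3, K ∈ (ℕ≥2 ∪ {∞})^d, and any permutation σ of {1,...,d}, the group with presentation ⟨a_1,...,a_d | a_i^{k_i} = 1 (if k_i < ∞), a_1⋯a_d = 1⟩ is isomorphic to the group with the same presentation where k_i is replaced by k_{σ(i)}. -/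
/-!
Permuting the exponents is realized by automorphisms of the free group that send each generator
to a conjugate of a permuted generator and the product `a_1 ⋯ a_d` to a conjugate of itself: such
an automorphism carries the normal closure of one relator set onto the other. Rotating the
generators cyclically conjugates the product, and the Hurwitz move
`(a_1, a_2) ↦ (a_1 a_2 a_1⁻¹, a_1)` fixes it; they realize the `d`-cycle and the transposition
`(1 2)`, which together generate the symmetric group.
-/

open Equiv Subgroup FreeGroup

theorem Subgroup.normalClosure_le_normalClosure_of_isConj {G : Type*} [Group G] {s t : Set G}
    (h : ∀ x ∈ s, ∃ y ∈ t, IsConj y x) : normalClosure s ≤ normalClosure t :=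
  normalClosure_le_normal fun x hx =>
    conjugatesOfSet_subset_normalClosure (Group.mem_conjugatesOfSet_iff.2 (h x hx))

theorem isConj_mul_comm {G : Type*} [Group G] (a b : G) : IsConj (a * b) (b * a) :=
  isConj_iff.2 ⟨b, by group⟩

def prodOfGenerators (d : ℕ) : FreeGroup (Fin d) :=
  (List.ofFn fun i : Fin d => of i).prod

theorem nonempty_mulEquiv_altRels_of_isConj {d : ℕ} (k : Fin d → ℕ) (τ : Perm (Fin d))
    (e : FreeGroup (Fin d) ≃* FreeGroup (Fin d)) (hgen : ∀ i, IsConj (of i) (e (of (τ i))))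
    (hprod : IsConj (prodOfGenerators d) (e (prodOfGenerators d))) :
    Nonempty (PresentedGroup (altRels d k) ≃* PresentedGroup (altRels d (k ∘ τ))) := by
  refine ⟨QuotientGroup.congr _ _ e ?_⟩
  rw [map_normalClosure _ _ e.surjective]
  apply le_antisymm <;> apply normalClosure_le_normalClosure_of_isConj
  · rintro _ ⟨r, ⟨j, rfl⟩ | rfl, rfl⟩
    · obtain ⟨i, rfl⟩ := τ.surjective j
      exact ⟨_, Or.inl ⟨i, rfl⟩, by simpa using (hgen i).pow (k (τ i))⟩
    · exact ⟨_, Or.inr rfl, hprod⟩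
  · rintro _ (⟨i, rfl⟩ | rfl)
    · exact ⟨_, ⟨_, Or.inl ⟨τ i, rfl⟩, rfl⟩,
        by simpa using ((hgen i).pow (k (τ i))).symm⟩
    · exact ⟨_, ⟨_, Or.inr rfl, rfl⟩, hprod.symm⟩

def altRelsSymmetries (d : ℕ) : Subgroup (Perm (Fin d)) where
  carrier :=
    {τ | ∀ k, Nonempty (PresentedGroup (altRels d k) ≃* PresentedGroup (altRels d (k ∘ τ)))}
  one_mem' k := ⟨MulEquiv.refl _⟩
  mul_mem' {τ₁ τ₂} h₁ h₂ k := by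
    obtain ⟨e₁⟩ := h₁ k
    obtain ⟨e₂⟩ := h₂ (k ∘ τ₁)
    exact ⟨e₁.trans e₂⟩
  inv_mem' {τ} h k := by
    obtain ⟨e⟩ := h (k ∘ ⇑τ⁻¹)
    rw [Function.comp_assoc, ← Perm.coe_mul, inv_mul_cancel, Perm.coe_one, Function.comp_id] at e
    exact ⟨e.symm⟩

theorem finRotate_mem_altRelsSymmetries (n : ℕ) :
    finRotate (n + 1) ∈ altRelsSymmetries (n + 1) := by
  refine inv_mem_iff.1 fun k => nonempty_mulEquiv_altRels_of_isConj k _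
    (freeGroupCongr (finRotate (n + 1))) (fun i => ?_) ?_
  · rw [freeGroupCongr_apply, map.of, ← Perm.mul_apply, mul_inv_cancel, Perm.one_apply]
  · simp only [prodOfGenerators, map_list_prod, List.map_ofFn, Function.comp_def,
      freeGroupCongr_apply, map.of]
    rw [List.ofFn_succ, List.ofFn_succ']
    simp only [List.prod_cons, List.concat_eq_append, List.prod_append, List.prod_nil,
      mul_one, finRotate_apply, Fin.coeSucc_eq_succ, Fin.last_add_one]
    exact isConj_mul_comm _ _

def hurwitzMove (n : ℕ) : FreeGroup (Fin (n + 2)) ≃* FreeGroup (Fin (n + 2)) :=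
  MonoidHom.toMulEquiv
    (lift (Fin.cons (of 0 * of 1 * (of 0)⁻¹) (Fin.cons (of 0) fun i => of i.succ.succ)))
    (lift (Fin.cons (of 1) (Fin.cons ((of 1)⁻¹ * of 0 * of 1) fun i => of i.succ.succ)))
    (by ext i; induction i using Fin.cases with
      | zero => simp [mul_assoc]
      | succ i => cases i using Fin.cases <;> simp)
    (by ext i; induction i using Fin.cases with
      | zero => simp
      | succ i => cases i using Fin.cases <;> simp [mul_assoc])

section hurwitzMove

variable (n : ℕ)

@[simp] theorem hurwitzMove_of_zero : hurwitzMove n (of 0) = of 0 * of 1 * (of 0)⁻¹ := by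
  simp [hurwitzMove]

@[simp] theorem hurwitzMove_of_one : hurwitzMove n (of 1) = of 0 := by
  simp [hurwitzMove]

@[simp] theorem hurwitzMove_of_succ_succ (i : Fin n) :
    hurwitzMove n (of i.succ.succ) = of i.succ.succ := by
  simp [hurwitzMove]

theorem hurwitzMove_prodOfGenerators :
    hurwitzMove n (prodOfGenerators (n + 2)) = prodOfGenerators (n + 2) := by
  simp only [prodOfGenerators, map_list_prod, List.map_ofFn, Function.comp_def]
  simp [List.ofFn_succ, mul_assoc]

theorem swap_zero_one_mem_altRelsSymmetries : swap 0 1 ∈ altRelsSymmetries (n + 2) := by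
  refine fun k => nonempty_mulEquiv_altRels_of_isConj k _ (hurwitzMove n) (fun i => ?_)
    (by rw [hurwitzMove_prodOfGenerators])
  cases i using Fin.cases with
  | zero => rw [swap_apply_left, hurwitzMove_of_one]
  | succ i => cases i using Fin.cases with
    | zero => exact isConj_iff.2 ⟨of 0, by simp⟩
    | succ i =>
      rw [swap_apply_of_ne_of_ne (Fin.succ_ne_zero _) (Fin.succ_succ_ne_one _),
        hurwitzMove_of_succ_succ]

end hurwitzMove

theorem altRelsSymmetries_eq_top (d : ℕ) : altRelsSymmetries d = ⊤ := by
  match d with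
  | 0 | 1 => exact Subsingleton.elim _ _
  | n + 2 =>
    rw [eq_top_iff, ← Perm.closure_cycle_adjacent_swap isCycle_finRotate support_finRotate 0,
      closure_le, finRotate_apply, zero_add]
    rintro _ (rfl | rfl)
    · exact finRotate_mem_altRelsSymmetries (n + 1)
    · exact swap_zero_one_mem_altRelsSymmetries n

theorem stmt1_general (d : ℕ) (k : Fin d → ℕ)
    (σ : Equiv.Perm (Fin d)) :
    Nonempty (PresentedGroup (altRels d k) ≃* PresentedGroup (altRels d (k ∘ σ))) :=
  (altRelsSymmetries_eq_top d ▸ mem_top σ : σ ∈ altRelsSymmetries d) k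

/-- For `d ≥ 3`, `K ∈ (ℕ≥2 ∪ {∞})^d` and any permutation `σ` of the indices,
the group `⟨a_1,…,a_d ∣ a_i^{k_i} = 1 (k_i < ∞), a_1⋯a_d = 1⟩` is isomorphic to the group with
the same presentation with `k_i` replaced by `k_{σ(i)}`. -/
theorem stmt1 (d : ℕ) (hd : 3 ≤ d) (k : Fin d → ℕ) (hk : ∀ i, k i ≠ 1)
    (σ : Equiv.Perm (Fin d)) :
    Nonempty (PresentedGroup (altRels d k) ≃* PresentedGroup (altRels d (k ∘ σ))) :=
  stmt1_general d k σ
end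

section
/- Let W_K^+ be presented by ⟨a_1,...,a_d | a_i^{k_i} = 1 (for finite k_i), a_1⋯a_d = 1⟩ with some k_j = ∞. Then the element a_j has no nontrivial roots; in particular ⟨a_j⟩ is a maximal cyclic subgroup. -/
/-!
A permutation of `ℤ` commuting with the shift `x ↦ x + 1` is a translation `x ↦ x + t`, so a
root `y ^ p = (· + 1)` forces `p * t = 1`, i.e. `p = 1`: the shift has no nontrivial roots in
`Equiv.Perm ℤ`. It therefore suffices to map `W_K⁺` to `Equiv.Perm ℤ` with `a_j ↦ (· + 1)`.
Sending all generators but three (among them `a_j`) to `1`, what is needed is a factorisation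
`(· + 1) = b * c` with `b ^ m = 1` and `c ^ n = 1` for arbitrary `m, n ∈ {0} ∪ ℕ≥2`. For `m` or
`n` equal to `0` this is trivial, and otherwise `ℤ` is folded into a half-infinite chain of
alternating `m`-cycles of `b` and `n`-cycles of `c` whose boundary walk is the shift.
-/

open Function

def IsRootless {G : Type*} [Monoid G] (g : G) : Prop :=
  ∀ (x : G) (n : ℕ), 1 ≤ n → x ^ n = g → n = 1

namespace IsRootless

variable {G H : Type*} [Group G] [Group H] {g : G}

theorem of_map (φ : G →* H) (h : IsRootless (φ g)) : IsRootless g :=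
  fun x n hn hx => h (φ x) n hn (by rw [← map_pow, hx])

theorem zpowers_eq (h : IsRootless g) (hg : g ≠ 1) {x : G} (hx : g ∈ Subgroup.zpowers x) :
    Subgroup.zpowers x = Subgroup.zpowers g := by
  obtain ⟨z, hz⟩ := Subgroup.mem_zpowers_iff.mp hx
  have hn : 1 ≤ z.natAbs := by
    rw [Nat.one_le_iff_ne_zero, Int.natAbs_ne_zero]
    rintro rfl
    exact hg (by rw [← hz, zpow_zero])
  rcases Int.natAbs_eq z with h' | h'
  · have h1 : x ^ z.natAbs = g := by rw [← zpow_natCast, ← h', hz]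
    rw [← h1, h x _ hn h1, pow_one]
  · have h1 : x⁻¹ ^ z.natAbs = g := by rw [inv_pow, ← zpow_natCast, ← zpow_neg, ← h', hz]
    rw [← h1, h _ _ hn h1, pow_one, Subgroup.zpowers_inv]

end IsRootless

theorem isRootless_addRight_one : IsRootless (Equiv.addRight (1 : ℤ)) := by
  intro y p _ hy
  have hstep (x : ℤ) : y (x + 1) = y x + 1 := by
    simpa [hy] using congrArg (· x) (Commute.self_pow y p).eq
  have hy_eq : ⇑y = (· + y 0) := by
    funext x
    induction x using Int.induction_on with
    | zero => simp
    | succ i ih => rw [hstep, ih]; ring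
    | pred i ih =>
      have := hstep (-(i : ℤ) - 1)
      rw [sub_add_cancel] at this
      linarith
  have h0 : (y ^ p) 0 = Equiv.addRight 1 0 := by rw [hy]
  rw [Equiv.Perm.coe_pow, hy_eq, add_right_iterate] at h0
  simp only [Equiv.coe_addRight, zero_add, nsmul_eq_mul] at h0
  exact_mod_cast Int.eq_one_of_mul_eq_one_right (Nat.cast_nonneg p) h0

def permOfIterateEqId {α : Type*} (f : α → α) (N : ℕ) (h : f^[N + 1] = id) : Equiv.Perm α where
  toFun := f
  invFun := f^[N]
  left_inv x := by rw [← iterate_succ_apply, h, id]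
  right_inv x := by rw [← iterate_succ_apply' f, h, id]

theorem permOfIterateEqId_pow {α : Type*} (f : α → α) (N : ℕ) (h : f^[N + 1] = id) :
    permOfIterateEqId f N h ^ (N + 1) = 1 :=
  Equiv.ext fun x => by rw [Equiv.Perm.coe_pow]; exact congrFun h x

section Block

variable {f : ℤ → ℤ} {s e : ℤ} {L : ℕ}

theorem iterate_eq_add_of_step (hstep : ∀ i : ℕ, i + 1 < L → f (s + i) = s + i + 1) :
    ∀ i : ℕ, i < L → f^[i] s = s + i
  | 0, _ => by simp
  | i + 1, hi => by
    rw [iterate_succ_apply', iterate_eq_add_of_step hstep i (by omega), hstep i hi]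
    push_cast; ring

theorem isPeriodicPt_of_block (hL : 0 < L)
    (hstep : ∀ i : ℕ, i + 1 < L → f (s + i) = s + i + 1) (hlast : f (s + L - 1) = e)
    (hret : f e = s) :
    (∀ i : ℕ, i < L → IsPeriodicPt f (L + 1) (s + i)) ∧ IsPeriodicPt f (L + 1) e := by
  obtain ⟨L, rfl⟩ := Nat.exists_eq_add_of_lt hL
  have he : f^[L + 1] s = e := by
    rw [iterate_succ_apply', iterate_eq_add_of_step hstep L (by omega), ← hlast]
    push_cast; ring_nf
  have hs : IsPeriodicPt f (0 + L + 1 + 1) s := by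
    rw [IsPeriodicPt, IsFixedPt, zero_add, iterate_succ_apply', he, hret]
  refine ⟨fun i hi => ?_, he ▸ hs.apply_iterate _⟩
  rw [← iterate_eq_add_of_step hstep i hi]
  exact hs.apply_iterate i

end Block

theorem Int.not_natCast_dvd_mul_add (q : ℤ) {P i : ℕ} (h0 : 0 < i) (hi : i < P) :
    ¬ (P : ℤ) ∣ q * P + i := by
  rw [Int.dvd_add_right (dvd_mul_left _ _), Int.natCast_dvd_natCast]
  exact Nat.not_dvd_of_pos_of_lt h0 hi

namespace ShiftFactor

/- With `q ≥ 0`, the nontrivial cycles of `fst P Q` are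
`q P ↦ q P + 1 ↦ ⋯ ↦ (q + 1) P - 1 ↦ -(q + 1) Q - 1 ↦ q P` (length `P + 1`), and those of
`snd P Q` are `-(q + 1) Q - 1 ↦ ⋯ ↦ -q Q - 2 ↦ q P - 1 ↦ -(q + 1) Q - 1` (length `Q + 1`);
every other point is fixed. The point `-1` is the cap of the chain: it is fixed by `fst` and
closes the first cycle of `snd`. -/
def fst (P Q : ℕ) (x : ℤ) : ℤ :=
  if 0 ≤ x then (if (P : ℤ) ∣ x + 1 then -((x + 1) / P) * Q - 1 else x + 1)
  else if (Q : ℤ) ∣ x + 1 ∧ x ≠ -1 then (-(x + 1) / Q - 1) * P else x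

def snd (P Q : ℕ) (x : ℤ) : ℤ :=
  if -1 ≤ x then (if (P : ℤ) ∣ x + 1 then -((x + 1) / P + 1) * Q - 1 else x)
  else if (Q : ℤ) ∣ x + 2 then -(x + 2) / Q * P - 1 else x + 1

variable {P Q : ℕ} {x q : ℤ}

theorem fst_of_nonneg (hx : 0 ≤ x) (h : ¬ (P : ℤ) ∣ x + 1) : fst P Q x = x + 1 := by
  simp [fst, hx, h]

theorem fst_of_neg (hx : x < 0) (h : ¬ ((Q : ℤ) ∣ x + 1 ∧ x ≠ -1)) : fst P Q x = x := by
  simp only [fst, if_neg (not_le.mpr hx), if_neg h]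

theorem fst_mul_sub_one (hP : 0 < P) (hq : 0 < q) : fst P Q (q * P - 1) = -q * Q - 1 := by
  have hP' : (0 : ℤ) < P := by exact_mod_cast hP
  have hx : 0 ≤ q * P - 1 := by nlinarith
  rw [fst, if_pos hx, sub_add_cancel, if_pos (dvd_mul_left _ _), Int.mul_ediv_cancel q hP'.ne']

theorem fst_neg_mul_sub_one (hQ : 0 < Q) (hq : 0 < q) :
    fst P Q (-(q * Q) - 1) = (q - 1) * P := by
  have hQ' : (0 : ℤ) < Q := by exact_mod_cast hQ
  have hx : ¬ 0 ≤ -(q * Q) - 1 := by nlinarith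
  have hx' : -(q * Q) - 1 ≠ -1 := by nlinarith
  rw [fst, if_neg hx, sub_add_cancel, if_pos ⟨dvd_neg.mpr (dvd_mul_left _ _), hx'⟩, neg_neg,
    Int.mul_ediv_cancel q hQ'.ne']

theorem snd_of_nonneg (hx : 0 ≤ x) (h : ¬ (P : ℤ) ∣ x + 1) : snd P Q x = x := by
  simp [snd, show -1 ≤ x by omega, h]

theorem snd_of_lt (hx : x < -1) (h : ¬ (Q : ℤ) ∣ x + 2) : snd P Q x = x + 1 := by
  simp only [snd, if_neg (not_le.mpr hx), if_neg h]

theorem snd_mul_sub_one (hP : 0 < P) (hq : 0 ≤ q) : snd P Q (q * P - 1) = -(q + 1) * Q - 1 := by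
  have hP' : (0 : ℤ) < P := by exact_mod_cast hP
  have hx : -1 ≤ q * P - 1 := by nlinarith
  rw [snd, if_pos hx, sub_add_cancel, if_pos (dvd_mul_left _ _), Int.mul_ediv_cancel q hP'.ne']

theorem snd_neg_mul_sub_two (hQ : 0 < Q) (hq : 0 ≤ q) : snd P Q (-(q * Q) - 2) = q * P - 1 := by
  have hQ' : (0 : ℤ) < Q := by exact_mod_cast hQ
  have hx : ¬ -1 ≤ -(q * Q) - 2 := by nlinarith
  rw [snd, if_neg hx, sub_add_cancel, if_pos (dvd_neg.mpr (dvd_mul_left _ _)), neg_neg,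
    Int.mul_ediv_cancel q hQ'.ne']

variable (hP : 0 < P) (hQ : 0 < Q)
include hP hQ

theorem fst_snd (x : ℤ) : fst P Q (snd P Q x) = x + 1 := by
  have hP' : (0 : ℤ) < P := by exact_mod_cast hP
  have hQ' : (0 : ℤ) < Q := by exact_mod_cast hQ
  by_cases hx : -1 ≤ x
  · by_cases hdvd : (P : ℤ) ∣ x + 1
    · obtain ⟨q, hq⟩ := hdvd
      have hq0 : 0 ≤ q := by nlinarith
      rw [show x = q * P - 1 by linarith, snd_mul_sub_one hP hq0,
        show -(q + 1) * Q - 1 = -((q + 1) * Q) - 1 by ring, fst_neg_mul_sub_one hQ (by omega)]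
      ring
    · have hx0 : 0 ≤ x := by
        rcases hx.eq_or_lt with rfl | h
        · exact absurd (by simp) hdvd
        · omega
      rw [snd_of_nonneg hx0 hdvd, fst_of_nonneg hx0 hdvd]
  · by_cases hdvd : (Q : ℤ) ∣ x + 2
    · obtain ⟨q, hq⟩ := hdvd
      have hq0 : 0 ≤ -q := by nlinarith
      rw [show x = -(-q * Q) - 2 by linarith, snd_neg_mul_sub_two hQ hq0]
      rcases hq0.eq_or_lt with h | h
      · rw [← h, fst_of_neg (by omega) (by simp)]
        ring
      · rw [fst_mul_sub_one hP h]
        ring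
    · have hdvd' : ¬ ((Q : ℤ) ∣ x + 1 + 1 ∧ x + 1 ≠ -1) := fun h =>
        hdvd (by simpa [add_assoc] using h.1)
      rw [snd_of_lt (by omega) hdvd, fst_of_neg (by omega) hdvd']

theorem iterate_fst : (fst P Q)^[P + 1] = id := by
  have hP' : (0 : ℤ) < P := by exact_mod_cast hP
  have hQ' : (0 : ℤ) < Q := by exact_mod_cast hQ
  have block (q : ℤ) (hq : 0 ≤ q) := isPeriodicPt_of_block (f := fst P Q) (s := q * P)
    (e := -((q + 1) * Q) - 1) hP
    (fun i hi => fst_of_nonneg (by positivity) (by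
      rw [add_assoc]; exact_mod_cast Int.not_natCast_dvd_mul_add q i.succ_pos hi))
    (by rw [show q * P + P - 1 = (q + 1) * P - 1 by ring, fst_mul_sub_one hP (by omega)]; ring)
    (by rw [fst_neg_mul_sub_one hQ (by omega)]; ring)
  funext x
  show IsPeriodicPt (fst P Q) (P + 1) x
  rcases le_or_gt 0 x with hx | hx
  · have hr := Int.emod_nonneg x hP'.ne'
    have hr' := Int.emod_lt_of_pos x hP'
    have := (block (x / P) (Int.ediv_nonneg hx hP'.le)).1 (x % P).toNat (by omega)
    rwa [Int.toNat_of_nonneg hr, Int.ediv_mul_add_emod] at this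
  · by_cases h : (Q : ℤ) ∣ x + 1 ∧ x ≠ -1
    · obtain ⟨⟨c, hc⟩, hx1⟩ := h
      have hc0 : c < 0 := by nlinarith [show x + 1 < 0 by omega]
      convert (block (-c - 1) (by omega)).2 using 1
      linear_combination hc
    · exact IsFixedPt.isPeriodicPt (fst_of_neg hx h) _

theorem iterate_snd : (snd P Q)^[Q + 1] = id := by
  have hP' : (0 : ℤ) < P := by exact_mod_cast hP
  have hQ' : (0 : ℤ) < Q := by exact_mod_cast hQ
  have block (q : ℤ) (hq : 0 ≤ q) := isPeriodicPt_of_block (f := snd P Q)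
    (s := -((q + 1) * Q) - 1) (e := q * P - 1) hQ
    (fun i hi => snd_of_lt (by nlinarith) (by
      convert Int.not_natCast_dvd_mul_add (-(q + 1)) i.succ_pos hi using 2
      push_cast; ring))
    (by rw [show -((q + 1) * Q) - 1 + Q - 1 = -(q * Q) - 2 by ring, snd_neg_mul_sub_two hQ hq])
    (by rw [snd_mul_sub_one hP hq]; ring)
  funext x
  show IsPeriodicPt (snd P Q) (Q + 1) x
  rcases lt_or_ge x (-1) with hx | hx
  · have hr := Int.emod_nonneg (-x - 2) hQ'.ne'
    have hr' := Int.emod_lt_of_pos (-x - 2) hQ'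
    have := (block ((-x - 2) / Q) (Int.ediv_nonneg (by omega) hQ'.le)).1
      (Q - 1 - (-x - 2) % Q).toNat (by omega)
    convert this using 1
    rw [Int.toNat_of_nonneg (by omega)]
    linear_combination Int.ediv_mul_add_emod (-x - 2) Q
  · by_cases h : (P : ℤ) ∣ x + 1
    · obtain ⟨c, hc⟩ := h
      convert (block c (by nlinarith)).2 using 1
      linear_combination hc
    · have hx0 : 0 ≤ x := by
        rcases hx.eq_or_lt with rfl | h'
        · exact absurd (by simp) h
        · omega
      exact IsFixedPt.isPeriodicPt (snd_of_nonneg hx0 h) _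

end ShiftFactor

theorem exists_pow_eq_one_mul_eq_addRight_one {m n : ℕ} (hm : m ≠ 1) (hn : n ≠ 1) :
    ∃ b c : Equiv.Perm ℤ, b ^ m = 1 ∧ c ^ n = 1 ∧ b * c = Equiv.addRight 1 := by
  rcases m with _ | P
  · exact ⟨Equiv.addRight 1, 1, pow_zero _, one_pow _, mul_one _⟩
  rcases n with _ | Q
  · exact ⟨1, Equiv.addRight 1, one_pow _, pow_zero _, one_mul _⟩
  have hP : 0 < P := by omega
  have hQ : 0 < Q := by omega
  exact ⟨permOfIterateEqId _ P (ShiftFactor.iterate_fst hP hQ),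
    permOfIterateEqId _ Q (ShiftFactor.iterate_snd hP hQ), permOfIterateEqId_pow _ _ _,
    permOfIterateEqId_pow _ _ _, Equiv.ext (ShiftFactor.fst_snd hP hQ)⟩

theorem List.prod_ofFn_inv_mul {G : Type*} [Group G] (γ : ℕ → G) :
    ∀ n : ℕ, (List.ofFn fun i : Fin n => (γ i)⁻¹ * γ (i + 1)).prod = (γ 0)⁻¹ * γ n
  | 0 => by simp
  | n + 1 => by
    rw [List.ofFn_succ', List.prod_concat]
    simp only [Fin.val_castSucc, Fin.val_last]
    rw [List.prod_ofFn_inv_mul γ n]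
    group

theorem exists_hom_altRels_of_three {G : Type*} [Group G] {d : ℕ} {k : Fin d → ℕ}
    {p₁ p₂ p₃ : Fin d} (h₁₂ : p₁ < p₂) (h₂₃ : p₂ < p₃) {g₁ g₂ g₃ : G} (hg : g₁ * g₂ * g₃ = 1)
    (h₁ : g₁ ^ k p₁ = 1) (h₂ : g₂ ^ k p₂ = 1) (h₃ : g₃ ^ k p₃ = 1) :
    ∃ φ : PresentedGroup (altRels d k) →* G, φ (.of p₁) = g₁ ∧ φ (.of p₂) = g₂ ∧
      φ (.of p₃) = g₃ := by
  obtain rfl : g₃ = (g₁ * g₂)⁻¹ := eq_inv_of_mul_eq_one_right hg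
  have h₁₂' : (p₁ : ℕ) < p₂ := h₁₂
  have h₂₃' : (p₂ : ℕ) < p₃ := h₂₃
  -- `f i = (γ i)⁻¹ * γ (i + 1)` for a step function `γ`, so the product relation telescopes.
  let γ (t : ℕ) : G :=
    if t ≤ p₁ then 1 else if t ≤ p₂ then g₁ else if t ≤ p₃ then g₁ * g₂ else 1
  let f (i : Fin d) : G := (γ i)⁻¹ * γ (i + 1)
  have hf (i : Fin d) :
      f i = if i = p₁ then g₁ else if i = p₂ then g₂ else if i = p₃ then (g₁ * g₂)⁻¹ else 1 := by
    simp only [f, γ, ← Fin.val_inj]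
    split_ifs <;> first | omega | group
  have hrels : ∀ r ∈ altRels d k, FreeGroup.lift f r = 1 := by
    rintro r (⟨i, rfl⟩ | rfl)
    · rw [map_pow, FreeGroup.lift_apply_of, hf]
      split_ifs with e₁ e₂ e₃
      exacts [e₁ ▸ h₁, e₂ ▸ h₂, e₃ ▸ h₃, one_pow _]
    · rw [map_list_prod, List.map_ofFn, show FreeGroup.lift f ∘ FreeGroup.of = f from
        funext fun _ => FreeGroup.lift_apply_of, List.prod_ofFn_inv_mul]
      simp [γ, p₃.isLt.not_ge]
  refine ⟨PresentedGroup.toGroup hrels, ?_, ?_, ?_⟩ <;>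
    simp [PresentedGroup.toGroup.of, hf, h₁₂.ne', h₂₃.ne', (h₁₂.trans h₂₃).ne']

theorem exists_hom_altRels_eq_addRight_one {d : ℕ} (hd : 3 ≤ d) {k : Fin d → ℕ}
    (hk : ∀ i, k i ≠ 1) {j : Fin d} (hj : k j = 0) :
    ∃ φ : PresentedGroup (altRels d k) →* Equiv.Perm ℤ,
      φ (.of j) = Equiv.addRight 1 := by
  have hσ : Equiv.addRight (1 : ℤ) ^ k j = 1 := by rw [hj, pow_zero]
  rcases (by omega : (j : ℕ) = 0 ∨ (j : ℕ) = 1 ∨ 2 ≤ (j : ℕ)) with h | h | h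
  · obtain ⟨b, c, hb, hc, hbc⟩ :=
      exists_pow_eq_one_mul_eq_addRight_one (hk ⟨2, by omega⟩) (hk ⟨1, by omega⟩)
    obtain ⟨φ, hφ, -⟩ := exists_hom_altRels_of_three (p₁ := j) (p₂ := ⟨1, by omega⟩)
      (p₃ := ⟨2, by omega⟩) (g₁ := b * c) (g₂ := c⁻¹) (g₃ := b⁻¹) (Fin.lt_def.mpr (by simp [h]))
      (Fin.lt_def.mpr (by simp)) (by group) (hbc ▸ hσ) (by rw [inv_pow, hc, inv_one])
      (by rw [inv_pow, hb, inv_one])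
    exact ⟨φ, hφ.trans hbc⟩
  · obtain ⟨b, c, hb, hc, hbc⟩ :=
      exists_pow_eq_one_mul_eq_addRight_one (hk ⟨0, by omega⟩) (hk ⟨2, by omega⟩)
    obtain ⟨φ, -, hφ, -⟩ := exists_hom_altRels_of_three (p₁ := ⟨0, by omega⟩) (p₂ := j)
      (p₃ := ⟨2, by omega⟩) (g₁ := b⁻¹) (g₂ := b * c) (g₃ := c⁻¹) (Fin.lt_def.mpr (by simp [h]))
      (Fin.lt_def.mpr (by simp [h])) (by group) (by rw [inv_pow, hb, inv_one]) (hbc ▸ hσ)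
      (by rw [inv_pow, hc, inv_one])
    exact ⟨φ, hφ.trans hbc⟩
  · obtain ⟨b, c, hb, hc, hbc⟩ :=
      exists_pow_eq_one_mul_eq_addRight_one (hk ⟨1, by omega⟩) (hk ⟨0, by omega⟩)
    obtain ⟨φ, -, -, hφ⟩ := exists_hom_altRels_of_three (p₁ := ⟨0, by omega⟩)
      (p₂ := ⟨1, by omega⟩) (p₃ := j) (g₁ := c⁻¹) (g₂ := b⁻¹) (g₃ := b * c)
      (Fin.lt_def.mpr (by simp)) (Fin.lt_def.mpr (by simp; omega)) (by group)
      (by rw [inv_pow, hc, inv_one]) (by rw [inv_pow, hb, inv_one]) (hbc ▸ hσ)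
    exact ⟨φ, hφ.trans hbc⟩

/-- Let `W_K⁺ = ⟨a_1,…,a_d ∣ a_i^{k_i} = 1 (k_i finite), a_1⋯a_d = 1⟩` with
`d ≥ 3`, each `k_i ∈ ℕ≥2 ∪ {∞}` and some `k_j = ∞`.  Then `a_j` has no nontrivial roots:
if `x ^ n = a_j` with `n ≥ 1` then `n = 1`.  In particular `⟨a_j⟩` is a maximal cyclic
subgroup: every cyclic subgroup `⟨x⟩` containing `a_j` equals `⟨a_j⟩`. -/
theorem stmt3 (d : ℕ) (hd : 3 ≤ d) (k : Fin d → ℕ) (hk : ∀ i, k i ≠ 1)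
    (j : Fin d) (hj : k j = 0) :
    (∀ (x : PresentedGroup (altRels d k)) (n : ℕ), 1 ≤ n →
      x ^ n = PresentedGroup.of j → n = 1) ∧
    (∀ x : PresentedGroup (altRels d k),
      (PresentedGroup.of j : PresentedGroup (altRels d k)) ∈ Subgroup.zpowers x →
      Subgroup.zpowers x =
        Subgroup.zpowers (PresentedGroup.of j : PresentedGroup (altRels d k))) := by
  obtain ⟨φ, hφ⟩ := exists_hom_altRels_eq_addRight_one hd hk hj
  have hroot : IsRootless (PresentedGroup.of j : PresentedGroup (altRels d k)) :=
    .of_map φ (hφ ▸ isRootless_addRight_one)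
  have hne : (PresentedGroup.of j : PresentedGroup (altRels d k)) ≠ 1 := fun h => by
    simpa [hφ] using congrArg (φ · 0) h
  exact ⟨hroot, fun x hx => hroot.zpowers_eq hne hx⟩
end

section
/- Let K' = (k'_1,...,k'_p) where each k'_i divides k_i. In the natural quotient J(K) → J(K') (sending s_i to s̄_i), the image s̄_i has order exactly k'_i. Consequently, s_i^n lies in the kernel J(K|K') if and only if k'_i divides n. -/
/-- The cyclically rotated product `a_i a_{i+1} ⋯ a_{i+p-1}` in the free group on `Fin p`
(indices taken mod `p`). -/
def cycProd (p : ℕ) (i : Fin p) : FreeGroup (Fin p) :=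
  (List.ofFn (fun j : Fin p => FreeGroup.of (i + j))).prod

/-- Relators of the generalized parent J-group `J(K)`:
`⟨s_1,…,s_p ∣ s_1⋯s_p = s_2⋯s_p s_1 = ⋯ = s_p s_1⋯s_{p-1}, s_i^{k_i} = 1 if k_i < ∞⟩`.
Here `k i = 0` encodes `k_i = ∞` (the relator `s_i ^ 0` is vacuous), and the equalities of
all cyclic rotations of the product are encoded by the relators
`(s_i ⋯ s_{i+p-1}) (s_j ⋯ s_{j+p-1})⁻¹`. -/
def JRels (p : ℕ) (k : Fin p → ℕ) : Set (FreeGroup (Fin p)) :=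
  {r | (∃ i, r = FreeGroup.of i ^ k i) ∨ ∃ i j, r = cycProd p i * (cycProd p j)⁻¹}

/-- The generalized parent J-group `J(K)`. -/
abbrev JGroup (p : ℕ) (k : Fin p → ℕ) := PresentedGroup (JRels p k)

/-- The central element `z = s_1 s_2 ⋯ s_p` of `J(K)`. -/
def zElt (p : ℕ) (k : Fin p → ℕ) : JGroup p k :=
  (List.ofFn (fun i : Fin p => (PresentedGroup.of i : JGroup p k))).prod

/-!
In a commutative group all cyclic rotations of `s_1 ⋯ s_p` coincide, so the abelianization of
`J(K)` is `∏ ℤ/k_i`. Projecting onto the `i`-th factor shows that `s_i` has order exactly `k_i`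
in `J(K)`, for every `K`; applied to `K'`, the kernel criterion is then
`orderOf_dvd_iff_pow_eq_one`.
-/

lemma FreeGroup.lift_cycProd {G : Type*} [CommGroup G] {p : ℕ} (f : Fin p → G) (i : Fin p) :
    FreeGroup.lift f (cycProd p i) = ∏ j, f j := by
  simp only [cycProd, map_list_prod, List.map_ofFn, Function.comp_def, FreeGroup.lift_apply_of,
    List.prod_ofFn]
  have : NeZero p := ⟨i.pos.ne'⟩
  exact Equiv.prod_comp (Equiv.addLeft i) f

namespace JGroup

variable {p : ℕ} {k : Fin p → ℕ}

lemma of_pow_eq_one (i : Fin p) : (PresentedGroup.of i : JGroup p k) ^ k i = 1 := by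
  rw [PresentedGroup.of, ← map_pow]
  exact PresentedGroup.one_of_mem (Or.inl ⟨i, rfl⟩)

def liftComm {G : Type*} [CommGroup G] (f : Fin p → G) (hf : ∀ i, f i ^ k i = 1) :
    JGroup p k →* G :=
  PresentedGroup.toGroup (rels := JRels p k) (f := f) <| by
    rintro r (⟨i, rfl⟩ | ⟨i, j, rfl⟩)
    · rw [map_pow, FreeGroup.lift_apply_of, hf]
    · rw [map_mul, map_inv, FreeGroup.lift_cycProd, FreeGroup.lift_cycProd, mul_inv_cancel]

@[simp]
lemma liftComm_of {G : Type*} [CommGroup G] (f : Fin p → G) (hf : ∀ i, f i ^ k i = 1)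
    (i : Fin p) : liftComm f hf (PresentedGroup.of i) = f i :=
  PresentedGroup.toGroup.of _

lemma orderOf_of (i : Fin p) : orderOf (PresentedGroup.of i : JGroup p k) = k i := by
  let f : Fin p → Multiplicative (ZMod (k i)) := Pi.mulSingle i (Multiplicative.ofAdd 1)
  have hf : ∀ j, f j ^ k j = 1 := by
    intro j
    rcases eq_or_ne j i with rfl | hj
    · simp [f, ← ofAdd_nsmul]
    · simp [f, hj]
  refine Nat.dvd_antisymm (orderOf_dvd_of_pow_eq_one (of_pow_eq_one i)) ?_
  have h := orderOf_map_dvd (liftComm f hf) (PresentedGroup.of i)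
  rwa [liftComm_of, show f i = Multiplicative.ofAdd 1 from Pi.mulSingle_eq_same _ _,
    orderOf_ofAdd_eq_addOrderOf, ZMod.addOrderOf_one] at h

end JGroup

theorem stmt7_general (p : ℕ) (k k' : Fin p → ℕ)
    (π : JGroup p k →* JGroup p k') (hπ : ∀ i, π (PresentedGroup.of i) = PresentedGroup.of i) :
    (∀ i : Fin p, orderOf (PresentedGroup.of i : JGroup p k') = k' i) ∧
    (∀ (i : Fin p) (n : ℕ),
      ((PresentedGroup.of i : JGroup p k) ^ n ∈ π.ker ↔ k' i ∣ n)) := by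
  refine ⟨fun i => JGroup.orderOf_of i, fun i n => ?_⟩
  rw [MonoidHom.mem_ker, map_pow, hπ, ← JGroup.orderOf_of (k := k') i, orderOf_dvd_iff_pow_eq_one]

/-- Let `K' = (k'_1,…,k'_p)` with each `k'_i` a (finite) divisor of `k_i`,
and let `π : J(K) →* J(K')` be the natural quotient map (sending `s_i` to `s̄_i`).  Then the
image `s̄_i` has order exactly `k'_i`, and consequently `s_i^n ∈ J(K∣K') = ker π` if and only
if `k'_i ∣ n`. -/
theorem stmt7 (p : ℕ) (k k' : Fin p → ℕ) (hk : ∀ i, k i ≠ 1)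
    (hdvd : ∀ i, k' i ∣ k i) (hfin : ∀ i, k' i ≠ 0)
    (π : JGroup p k →* JGroup p k') (hπ : ∀ i, π (PresentedGroup.of i) = PresentedGroup.of i) :
    (∀ i : Fin p, orderOf (PresentedGroup.of i : JGroup p k') = k' i) ∧
    (∀ (i : Fin p) (n : ℕ),
      ((PresentedGroup.of i : JGroup p k) ^ n ∈ π.ker ↔ k' i ∣ n)) :=
  stmt7_general p k k' π hπ
end

section
/- Two reflections g s_i^n g^{-1} and h s_j^m h^{-1} in J(K) (with 1 ≤ n ≤ k_i − 1 and 1 ≤ m ≤ k_j − 1) are conjugate in J(K) if and only if i = j and n = m. -/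
def fgen (p : ℕ) (k : Fin p → ℕ) : Fin p → (∀ i : Fin p, Multiplicative (ZMod (k i))) :=
  fun i => Pi.mulSingle i (Multiplicative.ofAdd 1)

lemma lift_cycProd (p : ℕ) (k : Fin p → ℕ) (i : Fin p) :
    FreeGroup.lift (fgen p k) (cycProd p i) = ∏ t : Fin p, fgen p k t := by
  haveI : NeZero p := ⟨i.pos.ne'⟩
  rw [cycProd, map_list_prod, List.map_ofFn, List.prod_ofFn]
  simp only [Function.comp_def, FreeGroup.lift_apply_of]
  exact Equiv.prod_comp (Equiv.addLeft i) (fgen p k)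

lemma rels_hold (p : ℕ) (k : Fin p → ℕ) :
    ∀ r ∈ JRels p k, FreeGroup.lift (fgen p k) r = 1 := by
  rintro r (⟨i, rfl⟩ | ⟨i, j, rfl⟩)
  · simp only [map_pow, FreeGroup.lift_apply_of, fgen]
    ext t
    by_cases ht : t = i
    · subst ht
      simp [Pi.mulSingle_eq_same, ← ofAdd_nsmul, ZMod.natCast_self]
    · simp [Pi.mulSingle_eq_of_ne ht]
  · simp [map_mul, map_inv, lift_cycProd]

def toAb (p : ℕ) (k : Fin p → ℕ) : JGroup p k →* (∀ i : Fin p, Multiplicative (ZMod (k i))) :=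
  PresentedGroup.toGroup (rels_hold p k)

lemma toAb_of (p : ℕ) (k : Fin p → ℕ) (i : Fin p) :
    toAb p k (PresentedGroup.of i) = fgen p k i :=
  PresentedGroup.toGroup.of (rels_hold p k)

lemma coord_eq (p : ℕ) (k : Fin p → ℕ) (i j : Fin p) (n m : ℕ)
    (E : fgen p k i ^ n = fgen p k j ^ m) (t : Fin p) :
    ((if t = i then (n : ZMod (k t)) else 0) = if t = j then (m : ZMod (k t)) else 0) := by
  have H := congrFun E t
  simp only [Pi.pow_apply, fgen] at H
  by_cases h1 : t = i <;> by_cases h2 : t = j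
  · subst h1; subst h2
    rw [if_pos rfl, if_pos rfl]
    simpa [Pi.mulSingle_eq_same, toAdd_pow, nsmul_eq_mul] using congrArg Multiplicative.toAdd H
  · subst h1
    rw [if_pos rfl, if_neg h2]
    simpa [Pi.mulSingle_eq_same, Pi.mulSingle_eq_of_ne h2, toAdd_pow, nsmul_eq_mul] using
      congrArg Multiplicative.toAdd H
  · subst h2
    rw [if_neg h1, if_pos rfl]
    simpa [Pi.mulSingle_eq_same, Pi.mulSingle_eq_of_ne h1, toAdd_pow, nsmul_eq_mul] using
      congrArg Multiplicative.toAdd H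
  · rw [if_neg h1, if_neg h2]

/-- Two reflections `g s_i^n g⁻¹` and `h s_j^m h⁻¹` of `J(K)`
(with `1 ≤ n ≤ k_i − 1` and `1 ≤ m ≤ k_j − 1`; when `k_i = ∞` the upper bound is vacuous)
are conjugate in `J(K)` if and only if `i = j` and `n = m`. -/
theorem stmt8 (p : ℕ) (k : Fin p → ℕ) (hk : ∀ i, k i ≠ 1)
    (i j : Fin p) (n m : ℕ) (hn : 1 ≤ n) (hm : 1 ≤ m)
    (hnk : k i ≠ 0 → n ≤ k i - 1) (hmk : k j ≠ 0 → m ≤ k j - 1)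
    (g h : JGroup p k) :
    IsConj (g * (PresentedGroup.of i : JGroup p k) ^ n * g⁻¹)
        (h * (PresentedGroup.of j : JGroup p k) ^ m * h⁻¹) ↔ i = j ∧ n = m := by
  constructor
  · intro hc
    have hc' := (toAb p k).map_isConj hc
    simp only [map_mul, map_inv, map_pow, toAb_of] at hc'
    rw [isConj_iff_eq] at hc'
    have E : fgen p k i ^ n = fgen p k j ^ m := by
      have e1 : ∀ (a b : ∀ t : Fin p, Multiplicative (ZMod (k t))), a * b * a⁻¹ = b := by
        intro a b; rw [mul_comm a b, mul_inv_cancel_right]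
      rw [e1, e1] at hc'
      exact hc'
    by_cases hij : i = j
    · subst hij
      refine ⟨rfl, ?_⟩
      have := coord_eq p k i i n m E i
      simp only [if_pos rfl] at this
      have hmod : n % k i = m % k i := (ZMod.natCast_eq_natCast_iff' n m (k i)).mp this
      rcases eq_or_ne (k i) 0 with h0 | h0
      · simpa [h0] using hmod
      · have h1 := hnk h0
        have h2 := hmk h0
        have hki : 1 ≤ k i := Nat.one_le_iff_ne_zero.mpr h0
        rw [Nat.mod_eq_of_lt (by omega), Nat.mod_eq_of_lt (by omega)] at hmod
        exact hmod
    · exfalso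
      have := coord_eq p k i j n m E i
      simp only [if_pos rfl, if_neg hij] at this
      have hmod : n % k i = 0 % k i := by
        have : (n : ZMod (k i)) = ((0 : ℕ) : ZMod (k i)) := by simpa using this
        exact (ZMod.natCast_eq_natCast_iff' n 0 (k i)).mp this
      rcases eq_or_ne (k i) 0 with h0 | h0
      · simp [h0] at hmod; omega
      · have h1 := hnk h0
        have hki : 1 ≤ k i := Nat.one_le_iff_ne_zero.mpr h0
        rw [Nat.zero_mod] at hmod
        have : k i ∣ n := Nat.dvd_of_mod_eq_zero hmod
        have := Nat.le_of_dvd (by omega) this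
        omega
  · rintro ⟨rfl, rfl⟩
    rw [isConj_iff]
    exact ⟨h * g⁻¹, by group⟩
end

section
/- Let G be a group abstractly isomorphic to the group G(p) = ⟨a_1,...,a_p | a_1⋯a_p = a_2⋯a_p a_1 = ⋯ = a_p a_1⋯a_{p−1}⟩. If X = {x_1,...,x_p} is a generating subset of G such that x_1⋯x_p generates Z(G), then the correspondence a_i ↦ x_i induces an isomorphism, i.e., G admits the presentation ⟨x_1,...,x_p | x_1⋯x_p = x_2⋯x_p x_1 = ⋯ = x_p x_1⋯x_{p−1}⟩. -/
/-!
Because `x_1⋯x_p` is central, every cyclic rotation of it equals it, so `a_i ↦ x_i` defines an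
epimorphism `φ : G(p) → G`; composed with an abstract isomorphism `G ≃ G(p)` it becomes a
surjective endomorphism of `G(p)`. Now `G(p)` is finitely generated and residually finite, since it
embeds into `F_{p-1} × ℤ` by `a_i ↦ (a_i, 0)` for `i < p` and `a_p ↦ ((a_1⋯a_{p-1})⁻¹, 1)`, and
finitely generated residually finite groups are Hopfian (Mal'cev). Hence `φ` is injective.

Free groups are residually finite: a reduced word `w` of length `N` acts nontrivially on
`{0, …, N}` once each generator `a` is made to move `k + 1` to `k` along the positions `k` where
`w` has the letter `a`, and `k` to `k + 1` where it has `a⁻¹`; reducedness makes these partial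
maps injective, so they extend to permutations.
-/

theorem List.prod_smul_of_forall_getElem_smul {M X : Type*} [Monoid M] [MulAction M X]
    (l : List M) (x : ℕ → X) (h : ∀ k (hk : k < l.length), l[k] • x (k + 1) = x k) :
    l.prod • x l.length = x 0 := by
  induction l generalizing x with
  | nil => simp
  | cons m l ih =>
    rw [List.prod_cons, List.length_cons, mul_smul,
      ih (fun k => x (k + 1)) fun k hk => h (k + 1) (by simpa using hk)]
    exact h 0 (by simp)

theorem List.prod_ofFn_snoc {M : Type*} {n : ℕ} [Monoid M] (f : Fin n → M) (a : M) :
    (List.ofFn (Fin.snoc f a : Fin (n + 1) → M)).prod = (List.ofFn f).prod * a := by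
  rw [List.ofFn_succ_last]
  simp

namespace FreeGroup

variable {α : Type*}

theorem IsReduced.exists_perm {L : List (α × Bool)} (hL : IsReduced L) (a : α) :
    ∃ σ : Equiv.Perm (Fin (L.length + 1)), ∀ k : Fin L.length, L[k].1 = a →
      σ (cond L[k].2 k.succ k.castSucc) = cond L[k].2 k.castSucc k.succ := by
  have adj : ∀ i j : Fin L.length, L[i].1 = a → L[j].1 = a → (j : ℕ) = i + 1 → L[i].2 = L[j].2 :=
    fun i j hi hj hij => by
      simpa [hij] using List.IsChain.getElem hL i (by omega) (by simpa [hij] using hi.trans hj.symm)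
  let ι := {k : Fin L.length // L[k].1 = a}
  refine (Equiv.Perm.exists_extending_pair (α := ι) (fun k => cond L[k.1].2 k.1.succ k.1.castSucc)
    (fun k => cond L[k.1].2 k.1.castSucc k.1.succ) ?_ ?_).imp fun σ hσ k ha => hσ ⟨k, ha⟩ <;>
  · rintro ⟨i, hi⟩ ⟨j, hj⟩ hij
    have hij' := adj i j hi hj
    have hji' := adj j i hj hi
    rw [Subtype.mk.injEq, Fin.ext_iff]
    cases hbi : L[i].2 <;> cases hbj : L[j].2 <;>
      simp only [hbi, hbj, cond_true, cond_false, Fin.ext_iff, Fin.val_succ, Fin.val_castSucc,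
        Bool.false_eq_true, Bool.true_eq_false, imp_false] at hij hij' hji' <;>
      omega

theorem IsReduced.exists_perm_hom_mk_ne_one {L : List (α × Bool)} (hL : IsReduced L)
    (hne : L ≠ []) : ∃ ρ : FreeGroup α →* Equiv.Perm (Fin (L.length + 1)), ρ (mk L) ≠ 1 := by
  choose σ hσ using hL.exists_perm
  refine ⟨lift σ, fun hρ => hne ?_⟩
  let x : ℕ → Fin (L.length + 1) := fun j => ⟨min j L.length, by omega⟩
  have walk := (L.map fun y => cond y.2 (σ y.1) (σ y.1)⁻¹).prod_smul_of_forall_getElem_smul x ?_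
  · rw [← lift_mk, hρ, one_smul] at walk
    simpa [x, Fin.ext_iff] using walk
  · intro k hk
    rw [List.length_map] at hk
    have hstep := hσ _ ⟨k, hk⟩ rfl
    simp only [Fin.getElem_fin] at hstep
    have hx : x (k + 1) = Fin.succ ⟨k, hk⟩ ∧ x k = Fin.castSucc ⟨k, hk⟩ := by
      simp only [x, Fin.ext_iff, Fin.val_succ, Fin.val_castSucc]; omega
    rw [List.getElem_map, hx.1, hx.2, Equiv.Perm.smul_def]
    cases hb : L[k].2 <;> simp only [hb, cond_true, cond_false] at hstep ⊢
    · rw [Equiv.Perm.inv_eq_iff_eq, hstep]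
    · exact hstep

theorem exists_perm_hom_ne_one {w : FreeGroup α} (hw : w ≠ 1) :
    ∃ (N : ℕ) (ρ : FreeGroup α →* Equiv.Perm (Fin (N + 1))), ρ w ≠ 1 := by
  classical
  rw [← mk_toWord (x := w)]
  exact ⟨_, isReduced_toWord.exists_perm_hom_mk_ne_one (by simpa using hw)⟩

instance : Group.ResiduallyFinite (FreeGroup α) :=
  Group.residuallyFinite_of_forall_exists_finite_monoidHom fun _ hw =>
    let ⟨_, ρ, hρ⟩ := exists_perm_hom_ne_one hw
    ⟨_, _, inferInstance, ρ, hρ⟩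

end FreeGroup

instance Int.residuallyFinite : Group.ResiduallyFinite (Multiplicative ℤ) :=
  Group.residuallyFinite_of_forall_exists_finite_monoidHom fun g hg => by
    let m := g.toAdd.natAbs + 1
    refine ⟨Multiplicative (ZMod m), inferInstance, inferInstance,
      (Int.castAddHom (ZMod m)).toMultiplicative, fun h => hg ?_⟩
    have hdvd : (m : ℤ) ∣ g.toAdd := (ZMod.intCast_zmod_eq_zero_iff_dvd _ m).mp (ofAdd_eq_one.mp h)
    exact toAdd_eq_zero.mp (Int.eq_zero_of_dvd_of_natAbs_lt_natAbs hdvd (by omega))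

namespace Group

variable {G H : Type*} [Group G] [Group H]

theorem residuallyFinite_of_injective [ResiduallyFinite H] (f : G →* H)
    (hf : Function.Injective f) : ResiduallyFinite G :=
  residuallyFinite_of_forall_exists_finite_monoidHom fun g hg => by
    obtain ⟨K, hK⟩ := exists_finiteIndexNormalSubgroup_notMem (f g) ((map_ne_one_iff f hf).mpr hg)
    exact ⟨H ⧸ K.toSubgroup, inferInstance, inferInstance, (QuotientGroup.mk' _).comp f,
      by simpa [QuotientGroup.eq_one_iff, ← FiniteIndexNormalSubgroup.mem_toSubgroup_iff] using hK⟩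

instance [FG G] [Finite H] : Finite (G →* H) := by
  obtain ⟨S, hS⟩ := FG.out (G := G)
  refine Finite.of_injective (fun f : G →* H => fun s : S => f s) fun f₁ f₂ h =>
    MonoidHom.eq_of_eqOn_dense hS fun s hs => congrFun h ⟨s, hs⟩

theorem injective_of_surjective_endomorphism [FG G] [ResiduallyFinite G] (f : G →* G)
    (hf : Function.Surjective f) : Function.Injective f := by
  refine (injective_iff_map_eq_one f).mpr fun g hg => by_contra fun hne => ?_
  obtain ⟨K, hK⟩ := exists_finiteIndexNormalSubgroup_notMem g hne
  have hcomp : Function.Surjective fun ψ : G →* G ⧸ K.toSubgroup => ψ.comp f :=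
    Finite.injective_iff_surjective.mp fun ψ₁ ψ₂ h => (MonoidHom.cancel_right hf).mp h
  obtain ⟨ψ, hψ⟩ := hcomp (QuotientGroup.mk' K.toSubgroup)
  apply hK
  rw [← FiniteIndexNormalSubgroup.mem_toSubgroup_iff, ← QuotientGroup.eq_one_iff,
    ← QuotientGroup.mk'_apply, ← hψ, MonoidHom.comp_apply, hg, map_one]

end Group

instance (p : ℕ) (k : Fin p → ℕ) : Group.FG (JGroup p k) :=
  Group.fg_of_surjective (PresentedGroup.mk_surjective _)

open FreeGroup (of)

section

variable {n : ℕ}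

theorem cycProd_add_one (i : Fin (n + 1)) :
    cycProd (n + 1) (i + 1) = (of i)⁻¹ * cycProd (n + 1) i * of i := by
  have h₁ : cycProd (n + 1) i = of i * (List.ofFn fun j : Fin n => of (i + j.succ)).prod := by
    rw [cycProd, List.ofFn_succ, List.prod_cons, add_zero]
  have h₂ : cycProd (n + 1) (i + 1) = (List.ofFn fun j : Fin n => of (i + j.succ)).prod * of i := by
    simp only [cycProd, List.ofFn_succ_last, List.prod_append, List.prod_singleton, add_assoc,
      add_comm (1 : Fin (n + 1)), Fin.coeSucc_eq_succ, Fin.last_add_one, add_zero]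
  rw [h₁, h₂]
  group

theorem lift_cycProd_s10 {H : Type*} [Group H] {y : Fin (n + 1) → H}
    (hy : ∀ i, Commute (List.ofFn y).prod (y i)) (i : Fin (n + 1)) :
    FreeGroup.lift y (cycProd (n + 1) i) = (List.ofFn y).prod := by
  induction i using Fin.induction with
  | zero => simp [cycProd, map_list_prod, List.map_ofFn, Function.comp_def]
  | succ i ih =>
    rw [← Fin.coeSucc_eq_succ, cycProd_add_one, map_mul, map_mul, map_inv, ih,
      FreeGroup.lift_apply_of, mul_assoc, (hy _).eq, inv_mul_cancel_left]

namespace JGroup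

variable {H : Type*} [Group H]

def lift (y : Fin (n + 1) → H) (hy : ∀ i, Commute (List.ofFn y).prod (y i)) :
    JGroup (n + 1) (fun _ => 0) →* H :=
  PresentedGroup.toGroup (f := y) <| by
    rintro r (⟨i, rfl⟩ | ⟨i, j, rfl⟩)
    · simp
    · rw [map_mul, map_inv, lift_cycProd_s10 hy, lift_cycProd_s10 hy, mul_inv_cancel]

variable {y : Fin (n + 1) → H} (hy : ∀ i, Commute (List.ofFn y).prod (y i))

@[simp]
theorem lift_of (i : Fin (n + 1)) : lift y hy (PresentedGroup.of i) = y i :=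
  PresentedGroup.toGroup.of _

theorem lift_surjective (hgen : Subgroup.closure (Set.range y) = ⊤) :
    Function.Surjective (lift y hy) :=
  .of_comp (g := PresentedGroup.mk _) (FreeGroup.lift_surjective_iff_closure_range_eq_top.mpr hgen)

theorem mk_cycProd (i : Fin (n + 1)) :
    PresentedGroup.mk _ (cycProd (n + 1) i) = zElt (n + 1) (fun _ => 0) := by
  rw [PresentedGroup.mk_eq_mk_of_mul_inv_mem (Or.inr ⟨i, 0, rfl⟩)]
  simp only [cycProd, zElt, map_list_prod, List.map_ofFn, Function.comp_def, zero_add]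
  rfl

theorem commute_zElt (g : JGroup (n + 1) fun _ => 0) : Commute g (zElt (n + 1) fun _ => 0) := by
  have hof (i : Fin (n + 1)) : Commute (PresentedGroup.of i) (zElt (n + 1) fun _ => 0) := by
    have h := mk_cycProd (i + 1)
    rw [cycProd_add_one, map_mul, map_mul, map_inv, mk_cycProd, mul_assoc,
      inv_mul_eq_iff_eq_mul] at h
    exact h.symm
  have : Subgroup.closure (Set.range PresentedGroup.of) ≤
      Subgroup.centralizer {zElt (n + 1) fun _ => 0} := by
    rw [Subgroup.closure_le]
    rintro _ ⟨i, rfl⟩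
    exact Subgroup.mem_centralizer_singleton_iff.mpr (hof i)
  exact Subgroup.mem_centralizer_singleton_iff.mp
    (this (PresentedGroup.closure_range_of _ ▸ Subgroup.mem_top g))

noncomputable def toProd : JGroup (n + 1) (fun _ => 0) →* FreeGroup (Fin n) × Multiplicative ℤ :=
  (lift (Fin.snoc of (List.ofFn of).prod⁻¹) fun _ => by
      rw [List.prod_ofFn_snoc, mul_inv_cancel]; exact .one_left _).prod
    (lift (Fin.snoc 1 (.ofAdd 1)) fun _ => .all _ _)

noncomputable def ofProd : FreeGroup (Fin n) × Multiplicative ℤ →* JGroup (n + 1) (fun _ => 0) :=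
  (FreeGroup.lift fun j => PresentedGroup.of j.castSucc).noncommCoprod
    (zpowersHom _ (zElt (n + 1) fun _ => 0)) fun _ _ => by
      rw [zpowersHom_apply]; exact (commute_zElt _).zpow_right _

theorem ofProd_comp_toProd : (ofProd (n := n)).comp toProd = .id _ := by
  refine PresentedGroup.ext fun i => ?_
  induction i using Fin.lastCases with
  | last =>
    simp only [MonoidHom.comp_apply, toProd, ofProd, MonoidHom.prod_apply, lift_of, Fin.snoc_last,
      MonoidHom.noncommCoprod_apply, map_inv, map_list_prod, List.map_ofFn, Function.comp_def,
      FreeGroup.lift_apply_of, zpowersHom_apply, toAdd_ofAdd, zpow_one, MonoidHom.id_apply]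
    rw [zElt, List.ofFn_succ_last, List.prod_append, List.prod_singleton, inv_mul_cancel_left]
  | cast j => simp [toProd, ofProd, MonoidHom.noncommCoprod_apply]

theorem toProd_injective : Function.Injective (toProd (n := n)) :=
  Function.LeftInverse.injective (g := ofProd) (DFunLike.congr_fun ofProd_comp_toProd)

instance : Group.ResiduallyFinite (JGroup (n + 1) fun _ => 0) :=
  Group.residuallyFinite_of_injective toProd toProd_injective

end JGroup

end

/-- Let `G` be a group abstractly isomorphic to
`G(p) = ⟨a_1,…,a_p ∣ a_1⋯a_p = a_2⋯a_p a_1 = ⋯ = a_p a_1⋯a_{p−1}⟩` (i.e. `J(p·∞)`).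
If `x_1,…,x_p` generate `G` and `x_1⋯x_p` generates `Z(G)`, then `a_i ↦ x_i` induces an
isomorphism `G(p) ≃ G`. -/
theorem stmt10 (p : ℕ) (hp : 1 ≤ p) (G : Type*) [Group G]
    (hiso : Nonempty (G ≃* JGroup p (fun _ => 0)))
    (x : Fin p → G)
    (hgen : Subgroup.closure (Set.range x) = ⊤)
    (hcen : Subgroup.center G = Subgroup.zpowers ((List.ofFn x).prod)) :
    ∃ φ : JGroup p (fun _ => 0) ≃* G, ∀ i : Fin p, φ (PresentedGroup.of i) = x i := by
  obtain ⟨n, rfl⟩ : ∃ n, p = n + 1 := ⟨p - 1, by omega⟩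
  obtain ⟨ψ⟩ := hiso
  have hx (i : Fin (n + 1)) : Commute (List.ofFn x).prod (x i) :=
    (Subgroup.mem_center_iff.mp (hcen ▸ Subgroup.mem_zpowers _) (x i)).symm
  have hsurj := JGroup.lift_surjective hx hgen
  have hinj : Function.Injective (JGroup.lift x hx) :=
    (Group.injective_of_surjective_endomorphism (ψ.toMonoidHom.comp (JGroup.lift x hx))
      (ψ.surjective.comp hsurj)).of_comp (f := ψ)
  exact ⟨MulEquiv.ofBijective _ ⟨hinj, hsurj⟩, JGroup.lift_of hx⟩
end

section
/- Let J(K|K') be a reduced J-group with p ≥ 3 (K' has at most two entries > 1, pairwise coprime). Then the normal closure of {s_i^{k'_i} : 1 ≤ i ≤ p} in J(K) surjects onto W_K^+ under the map J(K) → W_K^+ (s_i ↦ a_i); equivalently, the inner automorphism group of J(K|K') is isomorphic to W_K^+. -/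
/-! In `W_K⁺ ⧸ ⟨⟨a_i^{k'_i}⟩⟩` every `a_l` with `k'_l = 1` dies, so the relation `a_1 ⋯ a_p = 1`
collapses to `x y = 1` for the two remaining generators, with `x^n = y^m = 1`. Then `y = x⁻¹`,
so `x` has order dividing `gcd(n, m) = 1` and the quotient is trivial. Since `π` is surjective,
it carries the normal closure of the `s_i^{k'_i}` onto that of the `a_i^{k'_i}`. -/

namespace List

variable {M : Type*} [Monoid M]

theorem prod_eq_getElem_of_forall_ne {l : List M} {i : ℕ} (hi : i < l.length)
    (h : ∀ (n : ℕ) (hn : n < l.length), n ≠ i → l[n] = 1) : l.prod = l[i] := by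
  have hdrop : ∀ x ∈ l.drop (i + 1), x = 1 := by
    intro x hx
    obtain ⟨n, hn, rfl⟩ := List.mem_iff_getElem.mp hx
    rw [List.getElem_drop]
    exact h _ _ (by omega)
  have htake : ∀ x ∈ l.take i, x = 1 := by
    intro x hx
    obtain ⟨n, hn, rfl⟩ := List.mem_iff_getElem.mp hx
    rw [List.length_take] at hn
    rw [List.getElem_take]
    exact h _ _ (by omega)
  conv_lhs => rw [← List.set_getElem_self hi]
  rw [List.prod_set, if_pos hi, List.prod_eq_one htake, List.prod_eq_one hdrop, one_mul, mul_one]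

theorem prod_eq_getElem_mul_getElem_of_forall_ne {l : List M} {i j : ℕ} (hij : i < j)
    (hj : j < l.length) (h : ∀ (n : ℕ) (hn : n < l.length), n ≠ i → n ≠ j → l[n] = 1) :
    l.prod = l[i] * l[j] := by
  have hdrop : ∀ x ∈ l.drop (j + 1), x = 1 := by
    intro x hx
    obtain ⟨n, hn, rfl⟩ := List.mem_iff_getElem.mp hx
    rw [List.getElem_drop]
    exact h _ _ (by omega) (by omega)
  have htake : (l.take j).prod = l[i] := by
    rw [prod_eq_getElem_of_forall_ne (l := l.take j) (i := i) (by rw [List.length_take]; omega)]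
    · exact List.getElem_take
    · intro n hn hni
      rw [List.length_take] at hn
      rw [List.getElem_take]
      exact h _ _ hni (by omega)
  conv_lhs => rw [← List.set_getElem_self hj]
  rw [List.prod_set, if_pos hj, htake, List.prod_eq_one hdrop, mul_one]

end List

theorem eq_one_of_mul_eq_one_of_coprime {G : Type*} [Group G] {x y : G} {m n : ℕ}
    (hmn : m.Coprime n) (hxy : x * y = 1) (hx : x ^ m = 1) (hy : y ^ n = 1) : x = 1 := by
  have hxn : x ^ n = 1 := by
    rwa [eq_inv_of_mul_eq_one_right hxy, inv_pow, inv_eq_one] at hy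
  simpa [hmn.gcd_eq_one] using pow_gcd_eq_one.mpr ⟨hx, hxn⟩

theorem forall_eq_one_of_prod_ofFn_eq_one {G : Type*} [Group G] {p : ℕ} {g : Fin p → G}
    {n : Fin p → ℕ} (hprod : (List.ofFn g).prod = 1) (hpow : ∀ l, g l ^ n l = 1)
    (hcop : ∀ i j, i ≠ j → (n i).Coprime (n j))
    (hred : ∃ i j : Fin p, ∀ l, l ≠ i → l ≠ j → n l = 1) (l : Fin p) : g l = 1 := by
  obtain ⟨i, j, hij⟩ := hred
  have hone : ∀ l, l ≠ i → l ≠ j → g l = 1 := fun l hi hj => by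
    simpa [hij l hi hj] using hpow l
  suffices g i = 1 ∧ g j = 1 by
    by_cases hi : l = i
    · exact hi ▸ this.1
    by_cases hj : l = j
    · exact hj ▸ this.2
    exact hone l hi hj
  clear hij l
  wlog hle : i ≤ j generalizing i j
  · exact (this j i (fun l hj hi => hone l hi hj) (le_of_not_ge hle)).symm
  rcases hle.eq_or_lt with rfl | hlt
  · have hi : (List.ofFn g).prod = g i := by
      rw [List.prod_eq_getElem_of_forall_ne (i := i) (by simp)]
      · simp
      · intro m hm hmi
        rw [List.getElem_ofFn]
        exact hone _ (Fin.ne_of_val_ne hmi) (Fin.ne_of_val_ne hmi)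
    exact ⟨hi ▸ hprod, hi ▸ hprod⟩
  · have hij : g i * g j = 1 := by
      rw [← hprod, List.prod_eq_getElem_mul_getElem_of_forall_ne (i := i) (j := j) hlt (by simp)]
      · simp
      · intro m hm hmi hmj
        rw [List.getElem_ofFn]
        exact hone _ (Fin.ne_of_val_ne hmi) (Fin.ne_of_val_ne hmj)
    have hgi := eq_one_of_mul_eq_one_of_coprime (hcop i j hlt.ne) hij (hpow i) (hpow j)
    exact ⟨hgi, by rwa [hgi, one_mul] at hij⟩

theorem prod_ofFn_of_altRels (d : ℕ) (k : Fin d → ℕ) :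
    (List.ofFn (PresentedGroup.of : Fin d → PresentedGroup (altRels d k))).prod = 1 := by
  have h : PresentedGroup.mk (altRels d k) (List.ofFn fun i : Fin d => FreeGroup.of i).prod = 1 :=
    (QuotientGroup.eq_one_iff _).mpr (Subgroup.subset_normalClosure (Or.inr rfl))
  rwa [map_list_prod, List.map_ofFn] at h

theorem normalClosure_pow_of_altRels_eq_top {d : ℕ} (k k' : Fin d → ℕ)
    (hcop : ∀ i j, i ≠ j → (k' i).Coprime (k' j))
    (hred : ∃ i j : Fin d, ∀ l, l ≠ i → l ≠ j → k' l = 1) :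
    Subgroup.normalClosure
      {x | ∃ i : Fin d, x = (PresentedGroup.of i : PresentedGroup (altRels d k)) ^ k' i} = ⊤ := by
  set N := Subgroup.normalClosure
    {x | ∃ i : Fin d, x = (PresentedGroup.of i : PresentedGroup (altRels d k)) ^ k' i}
  have hgen : ∀ i, QuotientGroup.mk' N (PresentedGroup.of i) = 1 := by
    refine forall_eq_one_of_prod_ofFn_eq_one ?_ (fun i => ?_) hcop hred
    · rw [← map_one (QuotientGroup.mk' N), ← prod_ofFn_of_altRels d k, map_list_prod,
        List.map_ofFn]
      rfl
    · rw [← map_pow, QuotientGroup.mk'_apply, QuotientGroup.eq_one_iff]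
      exact Subgroup.subset_normalClosure ⟨i, rfl⟩
  have hmk : QuotientGroup.mk' N = 1 := PresentedGroup.ext hgen
  rw [← QuotientGroup.ker_mk' N, hmk, MonoidHom.ker_one]

theorem PresentedGroup.surjective_of_of_mem_range {α H : Type*} [Group H]
    {rels : Set (FreeGroup α)} (f : H →* PresentedGroup rels)
    (h : ∀ a, PresentedGroup.of a ∈ f.range) : Function.Surjective f := by
  rw [← MonoidHom.range_eq_top, eq_top_iff, ← PresentedGroup.closure_range_of rels,
    Subgroup.closure_le]
  rintro _ ⟨a, rfl⟩
  exact h a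

theorem stmt18_general (p : ℕ) (k k' : Fin p → ℕ)
    (hcop : ∀ i j, i ≠ j → Nat.Coprime (k' i) (k' j))
    (hred : ∃ i j : Fin p, ∀ l, l ≠ i → l ≠ j → k' l = 1)
    (π : JGroup p k →* PresentedGroup (altRels p k))
    (hπ : ∀ i, π (PresentedGroup.of i) = PresentedGroup.of i) :
    Subgroup.map π
      (Subgroup.normalClosure
        {x | ∃ i : Fin p, x = (PresentedGroup.of i : JGroup p k) ^ k' i}) = ⊤ := by
  have hsurj : Function.Surjective π :=
    PresentedGroup.surjective_of_of_mem_range π fun i => ⟨_, hπ i⟩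
  have himage : π '' {x | ∃ i : Fin p, x = (PresentedGroup.of i : JGroup p k) ^ k' i} =
      {x | ∃ i : Fin p, x = (PresentedGroup.of i : PresentedGroup (altRels p k)) ^ k' i} := by
    ext x
    simp only [Set.mem_image, Set.mem_ofPred_eq]
    constructor
    · rintro ⟨_, ⟨i, rfl⟩, rfl⟩
      exact ⟨i, by rw [map_pow, hπ]⟩
    · rintro ⟨i, rfl⟩
      exact ⟨_, ⟨i, rfl⟩, by rw [map_pow, hπ]⟩
  rw [Subgroup.map_normalClosure _ π hsurj, himage]
  exact normalClosure_pow_of_altRels_eq_top k k' hcop hred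

/-- Let `J(K∣K')` be a reduced J-group with `p ≥ 3` (`K'` has at most two
entries different from `1`, and its entries are pairwise coprime).  Let `π : J(K) →* W_K⁺`
be the natural map `s_i ↦ a_i` (the quotient by the center).  Then the normal closure of
`{s_i^{k'_i}}` in `J(K)` surjects onto `W_K⁺` under `π`; equivalently, the inner
automorphism group of `J(K∣K')` is isomorphic to `W_K⁺`. -/
theorem stmt18 (p : ℕ) (hp : 3 ≤ p) (k k' : Fin p → ℕ) (hk : ∀ i, k i ≠ 1)
    (hdvd : ∀ i, k' i ∣ k i) (hfin : ∀ i, k' i ≠ 0)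
    (hcop : ∀ i j, i ≠ j → Nat.Coprime (k' i) (k' j))
    (hred : ∃ i j : Fin p, ∀ l, l ≠ i → l ≠ j → k' l = 1)
    (π : JGroup p k →* PresentedGroup (altRels p k))
    (hπ : ∀ i, π (PresentedGroup.of i) = PresentedGroup.of i) :
    Subgroup.map π
      (Subgroup.normalClosure
        {x | ∃ i : Fin p, x = (PresentedGroup.of i : JGroup p k) ^ k' i}) = ⊤ :=
  stmt18_general p k k' hcop hred π hπ
end
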